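/- Let k ∈ ℝ with 2|k| = n ∈ ℕ, let z = x+iy and z' = x'+iy' be points of ℍ, and suppose 0 < ρ(z,z') < t. Then Ṽ_k(t,z,z') = (1/(2π))·((conj(z)−z')/(conj(z')−z))^k·(cosh²(t/2) − cosh²(ρ(z,z')/2))^{-1/2}·T_n(cosh(t/2)/cosh(ρ(z,z')/2)), where T_n is the Chebyshev polynomial of the first kind of degree n; i.e., the Gauss hypergeometric factor F(|k|, −|k|; 1/2; 1 − cosh²(t/2)/cosh²(ρ(z,z')/2)) of the kernel equals T_n(cosh(t/2)/cosh(ρ(z,z')/2)), where F(a,b;c;w) = Σ_{m≥0} (a)_m (b)_m / ((c)_m m!) · w^m denotes the Gauss hypergeometric series (extended by its analytic continuation for w outside the unit disc). -/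

import Mathlib

open MeasureTheory

noncomputable section

/-- `cosh²(ρ(z,z')/2)` where `ρ` is the hyperbolic distance on the upper half plane. -/
def coshSqDistH (z z' : ℂ) : ℝ :=
  ((z.re - z'.re) ^ 2 + (z.im + z'.im) ^ 2) / (4 * z.im * z'.im)

/-- The wave kernel `Ṽ_k(t,z,z')` on the hyperbolic upper half plane, in its Chebyshev
form (valid for `n = 2|k| ∈ ℕ`); the complex power is the principal branch. -/
def VH (k : ℝ) (n : ℕ) (t : ℝ) (z z' : ℂ) : ℂ :=
  if coshSqDistH z z' < Real.cosh (t / 2) ^ 2 then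
    ((1 / (2 * Real.pi) : ℝ) : ℂ)
      * (((starRingEnd ℂ) z - z') / ((starRingEnd ℂ) z' - z)) ^ (k : ℂ)
      * (((Real.cosh (t / 2) ^ 2 - coshSqDistH z z') ^ (-(1 / 2 : ℝ)) : ℝ) : ℂ)
      * (((Polynomial.Chebyshev.T ℝ (n : ℤ)).eval
            (Real.cosh (t / 2) / Real.sqrt (coshSqDistH z z')) : ℝ) : ℂ)
  else 0

/-- The hyperbolic measure `dμ̃(z) = y^{-2} dA(z)` on the upper half plane. -/
def muH : Measure ℂ :=
  (volume.restrict {z : ℂ | 0 < z.im}).withDensity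
    (fun z => ENNReal.ofReal ((z.im ^ 2)⁻¹))

/-- The modified Schrödinger operator with magnetic field on the upper half plane:
`𝒟̃_k f = y²(f_xx + f_yy) + 2iky f_x + (1/4) f`. -/
def DHop (k : ℝ) (f : ℂ → ℂ) (z : ℂ) : ℂ :=
  ((z.im ^ 2 : ℝ) : ℂ)
      * (fderiv ℝ (fun ζ => fderiv ℝ f ζ 1) z 1
          + fderiv ℝ (fun ζ => fderiv ℝ f ζ Complex.I) z Complex.I)
    + 2 * Complex.I * (k : ℂ) * (z.im : ℂ) * fderiv ℝ f z 1
    + (1 / 4 : ℂ) * f z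

end

noncomputable section

/-- `arcosh x = log (x + √(x²−1))`. -/
def arcosh (x : ℝ) : ℝ := Real.log (x + Real.sqrt (x ^ 2 - 1))

/-- The hyperbolic distance `ρ(z,z')` on the upper half plane. -/
def rhoH (z z' : ℂ) : ℝ := 2 * arcosh (Real.sqrt (coshSqDistH z z'))

end

/- ===== auxiliary development ===== -/
noncomputable section
namespace Stmt14Aux
open Polynomial

/-- Hypergeometric coefficient `(s)_m (-s)_m / ((1/2)_m m!)`. -/
def hgA (s : ℝ) (m : ℕ) : ℝ :=
  (ascPochhammer ℝ m).eval s * (ascPochhammer ℝ m).eval (-s)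
    / ((ascPochhammer ℝ m).eval (1 / 2) * (Nat.factorial m))

lemma hgA_neg (s : ℝ) (m : ℕ) : hgA (-s) m = hgA s m := by
  simp [hgA]; ring_nf

lemma hgA_zero (s : ℝ) : hgA s 0 = 1 := by
  simp [hgA]

lemma asc_half_pos (m : ℕ) : 0 < (ascPochhammer ℝ m).eval (1 / 2 : ℝ) :=
  ascPochhammer_pos m _ (by norm_num)

lemma asc_abs_le (s : ℝ) (m : ℕ) :
    |(ascPochhammer ℝ m).eval s| ≤ (|s| + 1) ^ m * (Nat.factorial m) := by
  induction m with
  | zero => simp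
  | succ m ih =>
    rw [ascPochhammer_succ_eval, abs_mul]
    have h1 : |s + (m : ℝ)| ≤ (|s| + 1) * (m + 1) := by
      calc |s + (m : ℝ)| ≤ |s| + m := abs_add_le _ _ |>.trans (by simp [abs_of_nonneg, Nat.cast_nonneg])
      _ ≤ (|s| + 1) * (m + 1) := by nlinarith [abs_nonneg s, Nat.cast_nonneg (α := ℝ) m]
    calc |(ascPochhammer ℝ m).eval s| * |s + (m:ℝ)|
        ≤ ((|s| + 1) ^ m * (Nat.factorial m)) * ((|s| + 1) * (m + 1)) := by
          apply mul_le_mul ih h1 (abs_nonneg _)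
          positivity
      _ = (|s| + 1) ^ (m + 1) * (Nat.factorial (m + 1)) := by
          rw [Nat.factorial_succ]; push_cast; ring

lemma asc_half_ge (m : ℕ) :
    (Nat.factorial m : ℝ) / 2 ^ m ≤ (ascPochhammer ℝ m).eval (1 / 2 : ℝ) := by
  induction m with
  | zero => simp
  | succ m ih =>
    rw [ascPochhammer_succ_eval]
    have h2 : (0:ℝ) < 2 ^ m := by positivity
    have : ((m:ℝ) + 1) / 2 ≤ (1/2 : ℝ) + m := by linarith [Nat.cast_nonneg (α := ℝ) m]
    calc ((Nat.factorial (m+1) : ℝ)) / 2 ^ (m+1)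
        = ((Nat.factorial m : ℝ) / 2 ^ m) * (((m:ℝ)+1)/2) := by
          rw [Nat.factorial_succ]; push_cast; field_simp; ring
      _ ≤ (ascPochhammer ℝ m).eval (1/2 : ℝ) * ((1/2 : ℝ) + m) := by
          apply mul_le_mul ih this (by positivity)
          exact (asc_half_pos m).le
      _ = _ := rfl

lemma hgA_abs_le (s : ℝ) (m : ℕ) : |hgA s m| ≤ (2 * (|s| + 1) ^ 2) ^ m := by
  have hden : 0 < (ascPochhammer ℝ m).eval (1/2 : ℝ) * (Nat.factorial m : ℝ) := by
    have := asc_half_pos m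
    have : (0:ℝ) < (Nat.factorial m : ℝ) := by positivity
    positivity
  rw [hgA, abs_div, abs_of_pos hden, div_le_iff₀ hden]
  have h2 : (Nat.factorial m : ℝ) / 2 ^ m * (Nat.factorial m : ℝ)
      ≤ (ascPochhammer ℝ m).eval (1/2:ℝ) * (Nat.factorial m : ℝ) := by
    apply mul_le_mul_of_nonneg_right (asc_half_ge m) (by positivity)
  calc |(ascPochhammer ℝ m).eval s * (ascPochhammer ℝ m).eval (-s)|
      ≤ ((|s| + 1) ^ m * (Nat.factorial m)) * ((|s| + 1) ^ m * (Nat.factorial m)) := by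
        rw [abs_mul]
        apply mul_le_mul (asc_abs_le s m) ((asc_abs_le (-s) m).trans (by rw [abs_neg])) (abs_nonneg _)
        positivity
    _ = (2 * (|s| + 1) ^ 2) ^ m * ((Nat.factorial m : ℝ) / 2 ^ m * (Nat.factorial m : ℝ)) := by
        rw [mul_pow, ← pow_mul]
        field_simp
        ring
    _ ≤ (2 * (|s| + 1) ^ 2) ^ m * ((ascPochhammer ℝ m).eval (1/2:ℝ) * (Nat.factorial m : ℝ)) := by
        apply mul_le_mul_of_nonneg_left h2 (by positivity)

lemma summable_hgA (s w : ℝ) (h : 2 * (|s| + 1) ^ 2 * |w| < 1) :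
    Summable (fun m => hgA s m * w ^ m) := by
  apply Summable.of_norm_bounded (g := fun m => (2 * (|s| + 1) ^ 2 * |w|) ^ m)
  · exact summable_geometric_of_lt_one (by positivity) h
  · intro m
    rw [Real.norm_eq_abs, abs_mul, abs_pow, mul_pow]
    exact mul_le_mul_of_nonneg_right (hgA_abs_le s m) (by positivity)

lemma asc_evalL (n : ℕ) (x : ℝ) :
    (ascPochhammer ℝ (n + 1)).eval x = x * (ascPochhammer ℝ n).eval (x + 1) := by
  rw [ascPochhammer_succ_left, X_mul, eval_mul, eval_X, eval_comp, eval_add, eval_X, eval_one,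
    mul_comm]

lemma hgN_rec (s : ℝ) (m : ℕ) :
    (ascPochhammer ℝ (m+1)).eval (s+1) * (ascPochhammer ℝ (m+1)).eval (-(s+1))
      + (ascPochhammer ℝ (m+1)).eval (s-1) * (ascPochhammer ℝ (m+1)).eval (-(s-1))
    = 2 * ((ascPochhammer ℝ (m+1)).eval s * (ascPochhammer ℝ (m+1)).eval (-s))
      - (4 * ((1/2 : ℝ) + m) * (m+1))
          * ((ascPochhammer ℝ m).eval s * (ascPochhammer ℝ m).eval (-s)) := by
  cases m with
  | zero => simp [ascPochhammer_one]; ring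
  | succ r =>
    set P : ℝ := (ascPochhammer ℝ r).eval (1 - s) with hP
    set Q : ℝ := (ascPochhammer ℝ r).eval (1 + s) with hQ
    have e1 : (ascPochhammer ℝ (r+1+1)).eval (s+1) = Q * ((s+1+r) * (s+1+r+1)) := by
      rw [ascPochhammer_succ_eval, ascPochhammer_succ_eval]
      push_cast; rw [show s + 1 = 1 + s by ring, ← hQ]; ring
    have e2 : (ascPochhammer ℝ (r+1+1)).eval (-(s+1)) = (-(s+1)) * (-s) * P := by
      rw [asc_evalL, asc_evalL]
      rw [show -(s+1) + 1 = -s by ring, show -s + 1 = 1 - s by ring, ← hP]; ring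
    have e3 : (ascPochhammer ℝ (r+1+1)).eval (s-1) = (s-1) * s * Q := by
      rw [asc_evalL, asc_evalL]
      rw [show s - 1 + 1 = s by ring, show s + 1 = 1 + s by ring, ← hQ]; ring
    have e4 : (ascPochhammer ℝ (r+1+1)).eval (-(s-1)) = P * ((1-s+r) * (1-s+r+1)) := by
      rw [ascPochhammer_succ_eval, ascPochhammer_succ_eval]
      push_cast; rw [show -(s-1) = 1 - s by ring, ← hP]; ring
    have e5 : (ascPochhammer ℝ (r+1+1)).eval s = s * (Q * (1+s+r)) := by
      rw [asc_evalL, ascPochhammer_succ_eval]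
      rw [show s + 1 = 1 + s by ring, ← hQ]
    have e6 : (ascPochhammer ℝ (r+1+1)).eval (-s) = (-s) * (P * (1-s+r)) := by
      rw [asc_evalL, ascPochhammer_succ_eval]
      rw [show -s + 1 = 1 - s by ring, ← hP]
    have e7 : (ascPochhammer ℝ (r+1)).eval s = s * Q := by
      rw [asc_evalL, show s + 1 = 1 + s by ring, ← hQ]
    have e8 : (ascPochhammer ℝ (r+1)).eval (-s) = (-s) * P := by
      rw [asc_evalL, show -s + 1 = 1 - s by ring, ← hP]
    rw [e1, e2, e3, e4, e5, e6, e7, e8]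
    push_cast
    ring

lemma hgA_rec (s : ℝ) (m : ℕ) :
    hgA (s+1) (m+1) + hgA (s-1) (m+1) = 2 * hgA s (m+1) - 4 * hgA s m := by
  have hm : (0:ℝ) < (ascPochhammer ℝ m).eval (1/2) * (Nat.factorial m) := by
    have := ascPochhammer_pos m (1/2 : ℝ) (by norm_num)
    have h2 : (0:ℝ) < (Nat.factorial m : ℝ) := by positivity
    positivity
  have hm1 : (0:ℝ) < (ascPochhammer ℝ (m+1)).eval (1/2) * (Nat.factorial (m+1)) := by
    have := ascPochhammer_pos (m+1) (1/2 : ℝ) (by norm_num)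
    have h2 : (0:ℝ) < (Nat.factorial (m+1) : ℝ) := by positivity
    positivity
  have hD : ((ascPochhammer ℝ (m+1)).eval (1/2) * (Nat.factorial (m+1)) : ℝ)
      = ((ascPochhammer ℝ m).eval (1/2) * (Nat.factorial m)) * (((1/2:ℝ) + m) * (m+1)) := by
    rw [ascPochhammer_succ_eval, Nat.factorial_succ]
    push_cast; ring
  have key := hgN_rec s m
  rw [hgA, hgA, hgA, hgA, ← add_div, hD]
  rw [key]
  have h12 : (0:ℝ) < (1/2:ℝ) + m := by positivity
  field_simp

/-! ### the binomial series for `√(1-w)` -/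

def bc (m : ℕ) : ℝ := (ascPochhammer ℝ m).eval (-(1/2)) / (Nat.factorial m)

lemma bc_zero : bc 0 = 1 := by simp [bc]

lemma bc_one : bc 1 = -(1/2) := by simp [bc, ascPochhammer_one]

lemma bc_rec (m : ℕ) : ((m:ℝ) + 1) * bc (m+1) = ((m:ℝ) - 1/2) * bc m := by
  rw [bc, bc, ascPochhammer_succ_eval, Nat.factorial_succ]
  have h1 : (Nat.factorial m : ℝ) ≠ 0 := by positivity
  have h2 : ((m:ℝ) + 1) ≠ 0 := by positivity
  push_cast
  field_simp
  ring

lemma bc_abs_le (m : ℕ) : |bc m| ≤ 1 := by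
  induction m with
  | zero => simp [bc_zero]
  | succ m ih =>
    have h2 : ((m:ℝ) + 1) ≠ 0 := by positivity
    have : bc (m+1) = ((m:ℝ) - 1/2) / ((m:ℝ) + 1) * bc m := by
      field_simp
      linarith [bc_rec m]
    rw [this, abs_mul]
    have : |((m:ℝ) - 1/2) / ((m:ℝ) + 1)| ≤ 1 := by
      rw [abs_div, div_le_one (by positivity)]
      rw [abs_of_nonneg (by positivity : (0:ℝ) ≤ (m:ℝ)+1)]
      cases abs_cases ((m:ℝ) - 1/2) with
      | inl h => linarith [h.1]
      | inr h => linarith [h.1]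
    calc |((m:ℝ) - 1/2) / ((m:ℝ) + 1)| * |bc m| ≤ 1 * 1 := by
          apply mul_le_mul this ih (abs_nonneg _) (by norm_num)
      _ = 1 := by norm_num

def bv (m : ℕ) : ℝ := ∑ i ∈ Finset.range (m+1), bc i * bc (m - i)

lemma bv_zero : bv 0 = 1 := by simp [bv, bc_zero]

lemma bv_one : bv 1 = -1 := by
  simp [bv, Finset.sum_range_succ, bc_zero, bc_one]; norm_num

lemma bv_symm_aux (M : ℕ) :
    ∑ i ∈ Finset.range (M+1), ((i:ℝ)) * (bc i * bc (M - i))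
      = ∑ i ∈ Finset.range (M+1), ((M:ℝ) - i) * (bc i * bc (M - i)) := by
  rw [← Finset.sum_range_reflect]
  apply Finset.sum_congr rfl
  intro i hi
  rw [Finset.mem_range] at hi
  have hiM : i ≤ M := Nat.lt_succ_iff.mp hi
  have h1 : M + 1 - 1 - i = M - i := by omega
  have h2 : M - (M - i) = i := by omega
  rw [h1, h2]
  have : ((M - i : ℕ) : ℝ) = (M:ℝ) - i := by
    push_cast [Nat.cast_sub hiM]; ring
  rw [this]
  ring

lemma bv_weighted (M : ℕ) :
    (M : ℝ) * bv M = 2 * ∑ i ∈ Finset.range (M+1), ((i:ℝ)) * (bc i * bc (M - i)) := by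
  have : (M:ℝ) * bv M = ∑ i ∈ Finset.range (M+1), ((i:ℝ) + ((M:ℝ) - i)) * (bc i * bc (M - i)) := by
    rw [bv, Finset.mul_sum]
    apply Finset.sum_congr rfl; intro i _; ring
  rw [this]
  have : ∑ i ∈ Finset.range (M+1), ((i:ℝ) + ((M:ℝ) - i)) * (bc i * bc (M - i))
      = ∑ i ∈ Finset.range (M+1), ((i:ℝ)) * (bc i * bc (M - i))
        + ∑ i ∈ Finset.range (M+1), ((M:ℝ) - i) * (bc i * bc (M - i)) := by
    rw [← Finset.sum_add_distrib]
    apply Finset.sum_congr rfl; intro i _; ring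
  rw [this, ← bv_symm_aux]; ring

lemma bv_rec (m : ℕ) : ((m:ℝ) + 2) * bv (m+2) = (m:ℝ) * bv (m+1) := by
  have hM := bv_weighted (m+2)
  have hshift : ∑ i ∈ Finset.range (m+2+1), ((i:ℝ)) * (bc i * bc (m+2 - i))
      = ∑ i ∈ Finset.range (m+2), (((i:ℝ)+1)) * (bc (i+1) * bc (m+1 - i)) := by
    rw [Finset.sum_range_succ']
    simp only [Nat.cast_zero, zero_mul, add_zero]
    apply Finset.sum_congr rfl
    intro i hi
    have : m + 2 - (i+1) = m + 1 - i := by omega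
    rw [this]
    push_cast; ring
  have hsub : ∀ i : ℕ, ((i:ℝ)+1) * (bc (i+1) * bc (m+1-i)) = ((i:ℝ) - 1/2) * (bc i * bc (m+1-i)) := by
    intro i
    have h := bc_rec i
    linear_combination bc (m+1-i) * h
  have hM1 := bv_weighted (m+1)
  have : ∑ i ∈ Finset.range (m+2), (((i:ℝ)+1)) * (bc (i+1) * bc (m+1 - i))
      = ∑ i ∈ Finset.range (m+2), ((i:ℝ)) * (bc i * bc (m+1-i)) - (1/2) * bv (m+1) := by
    rw [bv, Finset.mul_sum, ← Finset.sum_sub_distrib]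
    apply Finset.sum_congr rfl
    intro i _
    rw [hsub i]; ring
  have hfin : ((m:ℝ)+2) * bv (m+2) = 2 * (∑ i ∈ Finset.range (m+2), ((i:ℝ)) * (bc i * bc (m+1-i))) - bv (m+1) := by
    push_cast at hM
    rw [hM, hshift, this]
    ring
  rw [hfin]
  push_cast at hM1
  linarith [hM1]

lemma bv_eq_zero (m : ℕ) (hm : 2 ≤ m) : bv m = 0 := by
  induction m with
  | zero => omega
  | succ m ih =>
    rcases Nat.lt_or_ge m 2 with h | h
    · interval_cases m
      · omega
      · have := bv_rec 0
        simp at this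
        linarith
    · have := bv_rec (m-1)
      have hm1 : m - 1 + 2 = m + 1 := by omega
      have hm2 : m - 1 + 1 = m := by omega
      rw [hm1, hm2, ih (by omega)] at this
      have : ((m:ℝ) - 1 + 2) * bv (m+1) = 0 := by
        rw [show ((m-1:ℕ):ℝ) = (m:ℝ) - 1 by push_cast [Nat.cast_sub (by omega : 1 ≤ m)]; ring] at this
        linarith
      have hne : ((m:ℝ) - 1 + 2) ≠ 0 := by
        have : (2:ℝ) ≤ (m:ℝ) := by exact_mod_cast h
        linarith
      exact (mul_eq_zero.mp this).resolve_left hne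

lemma summable_norm_bc (w : ℝ) (hw : |w| < 1) : Summable (fun m => ‖bc m * w ^ m‖) := by
  have hg : Summable (fun m : ℕ => |w| ^ m) := summable_geometric_of_lt_one (abs_nonneg w) hw
  have hle : ∀ m : ℕ, ‖bc m * w ^ m‖ ≤ |w| ^ m := by
    intro m
    rw [Real.norm_eq_abs, abs_mul, abs_pow]
    calc |bc m| * |w| ^ m ≤ 1 * |w| ^ m :=
        mul_le_mul_of_nonneg_right (bc_abs_le m) (by positivity)
      _ = |w| ^ m := one_mul _
  exact Summable.of_nonneg_of_le (fun m => norm_nonneg _) hle hg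

lemma summable_bc (w : ℝ) (hw : |w| < 1) : Summable (fun m => bc m * w ^ m) :=
  (summable_norm_bc w hw).of_norm

lemma bc_tsum_sq (w : ℝ) (hw : |w| < 1) :
    (∑' m : ℕ, bc m * w ^ m) * (∑' m : ℕ, bc m * w ^ m) = 1 - w := by
  rw [tsum_mul_tsum_eq_tsum_sum_antidiagonal_of_summable_norm
    (summable_norm_bc w hw) (summable_norm_bc w hw)]
  have hterm : ∀ n : ℕ,
      (∑ kl ∈ Finset.HasAntidiagonal.antidiagonal n, (bc kl.1 * w ^ kl.1) * (bc kl.2 * w ^ kl.2))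
        = bv n * w ^ n := by
    intro n
    rw [Finset.Nat.sum_antidiagonal_eq_sum_range_succ_mk, bv, Finset.sum_mul]
    apply Finset.sum_congr rfl
    intro i hi
    rw [Finset.mem_range] at hi
    have hin : i ≤ n := Nat.lt_succ_iff.mp hi
    have : w ^ i * w ^ (n - i) = w ^ n := by
      rw [← pow_add]
      congr 1
      omega
    calc bc i * w ^ i * (bc (n - i) * w ^ (n - i)) = bc i * bc (n-i) * (w ^ i * w ^ (n-i)) := by ring
      _ = bc i * bc (n - i) * w ^ n := by rw [this]
  rw [tsum_congr hterm]
  rw [tsum_eq_sum (s := {0, 1}) (by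
    intro b hb
    simp only [Finset.mem_insert, Finset.mem_singleton] at hb
    push_neg at hb
    rw [bv_eq_zero b (by omega), zero_mul])]
  rw [Finset.sum_insert (by norm_num), Finset.sum_singleton, bv_zero, bv_one]
  ring

lemma bc_tsum_nonneg (w : ℝ) (hw : |w| ≤ 1/8) : 0 ≤ ∑' m : ℕ, bc m * w ^ m := by
  have hw1 : |w| < 1 := by linarith
  have hsum := summable_bc w hw1
  rw [Summable.tsum_eq_zero_add hsum]
  simp only [pow_zero, mul_one, bc]
  have hbc0 : (ascPochhammer ℝ 0).eval (-(1/2:ℝ)) / (Nat.factorial 0) = 1 := by simp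
  have htail : |∑' m : ℕ, bc (m+1) * w ^ (m+1)| ≤ 1/7 := by
    have hs : Summable (fun m => ‖bc (m+1) * w ^ (m+1)‖) := by
      have := summable_norm_bc w hw1
      exact (summable_nat_add_iff 1).mpr this
    calc |∑' m : ℕ, bc (m+1) * w ^ (m+1)| ≤ ∑' m : ℕ, ‖bc (m+1) * w ^ (m+1)‖ := by
          exact norm_tsum_le_tsum_norm hs
      _ ≤ ∑' m : ℕ, (1/8 : ℝ) * (1/8) ^ m := by
          apply Summable.tsum_le_tsum _ hs
          · exact Summable.mul_left _ (summable_geometric_of_lt_one (by norm_num) (by norm_num))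
          · intro m
            rw [Real.norm_eq_abs, abs_mul, abs_pow]
            calc |bc (m+1)| * |w| ^ (m+1) ≤ 1 * |w| ^ (m+1) :=
                mul_le_mul_of_nonneg_right (bc_abs_le (m+1)) (by positivity)
              _ = |w| * |w| ^ m := by rw [one_mul, pow_succ]; ring
              _ ≤ (1/8) * (1/8) ^ m := by
                  apply mul_le_mul hw (pow_le_pow_left₀ (abs_nonneg w) hw m) (by positivity) (by norm_num)
      _ = (1/8 : ℝ) * (1 - 1/8)⁻¹ := by
          rw [tsum_mul_left, tsum_geometric_of_lt_one (by norm_num) (by norm_num)]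
      _ ≤ 1/7 := by norm_num
  have := abs_le.mp htail
  simp only [bc] at this ⊢
  rw [hbc0]
  linarith [this.1]

lemma bc_tsum_eq_sqrt (w : ℝ) (hw : |w| ≤ 1/8) :
    ∑' m : ℕ, bc m * w ^ m = Real.sqrt (1 - w) := by
  have hw1 : |w| < 1 := by linarith
  rw [← bc_tsum_sq w hw1, Real.sqrt_mul_self (bc_tsum_nonneg w hw)]

end Stmt14Aux
end
/- ===== part 2: the hypergeometric sum equals the Chebyshev polynomial ===== -/
noncomputable section
namespace Stmt14Aux
open Polynomial

def hgS (s w : ℝ) : ℝ := ∑' m : ℕ, hgA s m * w ^ m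

lemma hgS_neg (s w : ℝ) : hgS (-s) w = hgS s w := by
  unfold hgS
  exact tsum_congr fun m => by rw [hgA_neg]

lemma hgS_rel (s w : ℝ) (h1 : 2*(|s|+1)^2*|w| < 1) (h2 : 2*(|s+1|+1)^2*|w| < 1)
    (h3 : 2*(|s-1|+1)^2*|w| < 1) :
    hgS (s+1) w + hgS (s-1) w = 2 * hgS s w - 4 * w * hgS s w := by
  have S1 := summable_hgA (s+1) w h2
  have S2 := summable_hgA (s-1) w h3
  have S0 := summable_hgA s w h1
  have hL : hgS (s+1) w + hgS (s-1) w
      = ∑' m : ℕ, (hgA (s+1) m * w ^ m + hgA (s-1) m * w ^ m) := (Summable.tsum_add S1 S2).symm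
  set h : ℕ → ℝ := fun m => if m = 0 then 0 else 4 * hgA s (m-1) * w ^ m with hh
  have hShift : Summable (fun m => h (m+1)) := by
    have : (fun m => h (m+1)) = fun m => (4*w) * (hgA s m * w ^ m) := by
      funext m
      simp only [hh, Nat.succ_ne_zero, if_false, Nat.add_sub_cancel]
      rw [pow_succ]; ring
    rw [this]
    exact S0.mul_left _
  have Sh : Summable h := (summable_nat_add_iff 1).mp hShift
  have hfun : (fun m : ℕ => hgA (s+1) m * w ^ m + hgA (s-1) m * w ^ m)
      = fun m => 2 * hgA s m * w ^ m - h m := by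
    funext m
    cases m with
    | zero => simp [hh, hgA_zero]; norm_num
    | succ r =>
      simp only [hh, Nat.succ_ne_zero, if_false, Nat.add_sub_cancel]
      have h := hgA_rec s r
      linear_combination w ^ (r+1) * h
  have hsum_h : ∑' m : ℕ, h m = 4 * w * hgS s w := by
    rw [Summable.tsum_eq_zero_add Sh]
    simp only [hh, if_pos rfl, zero_add]
    have : (fun m : ℕ => if m + 1 = 0 then (0:ℝ) else 4 * hgA s (m+1-1) * w ^ (m+1))
        = fun m => (4*w) * (hgA s m * w ^ m) := by
      funext m
      simp only [Nat.succ_ne_zero, if_false, Nat.add_sub_cancel]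
      rw [pow_succ]; ring
    rw [this, tsum_mul_left]
    rw [show (∑' m : ℕ, hgA s m * w ^ m) = hgS s w from rfl]
  rw [hL, hfun, Summable.tsum_sub ((S0.mul_left 2).congr (by intro m; ring)) Sh, hsum_h]
  have : ∑' m : ℕ, 2 * hgA s m * w ^ m = 2 * hgS s w := by
    simp only [hgS]
    rw [← tsum_mul_left]
    exact tsum_congr fun m => by ring
  rw [this]

lemma hgS_half (w : ℝ) : hgS (1/2) w = ∑' m : ℕ, bc m * w ^ m := by
  unfold hgS
  apply tsum_congr
  intro m
  congr 1
  rw [hgA, bc]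
  have hpos : 0 < (ascPochhammer ℝ m).eval (1/2 : ℝ) := ascPochhammer_pos m _ (by norm_num)
  field_simp

lemma hg_main : ∀ n : ℕ, ∀ w : ℝ, |w| < 2/((n:ℝ)+4)^2 →
    hgS ((n:ℝ)/2) w = (Polynomial.Chebyshev.T ℝ (n:ℤ)).eval (Real.sqrt (1-w)) := by
  intro n
  induction n using Nat.strong_induction_on with
  | _ n IH =>
    match n with
    | 0 =>
      intro w _
      have : hgS 0 w = 1 := by
        unfold hgS
        rw [tsum_eq_single 0 (by
          intro m hm
          rcases Nat.exists_eq_succ_of_ne_zero hm with ⟨r, rfl⟩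
          rw [hgA]
          rw [show (-(0:ℝ)) = 0 by ring, ascPochhammer_eval_zero]
          simp)]
        simp [hgA_zero]
      rw [show ((0:ℕ):ℝ)/2 = 0 by norm_num, this]
      simp [Polynomial.Chebyshev.T_zero]
    | 1 =>
      intro w hw
      have hw8 : |w| ≤ 1/8 := by
        have : 2/((1:ℝ)+4)^2 ≤ 1/8 := by norm_num
        push_cast at hw
        linarith
      rw [show ((1:ℕ):ℝ)/2 = 1/2 by norm_num, hgS_half, bc_tsum_eq_sqrt w hw8]
      simp [Polynomial.Chebyshev.T_one]
    | (m+2) =>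
      intro w hw
      push_cast at hw
      set s : ℝ := (m:ℝ)/2 with hs
      have hs0 : 0 ≤ s := by positivity
      have hwa : 0 ≤ |w| := abs_nonneg w
      have hm0 : (0:ℝ) ≤ (m:ℝ) := Nat.cast_nonneg m
      have hb2 : 2*(|s+1|+1)^2*|w| < 1 := by
        rw [abs_of_nonneg (by linarith : (0:ℝ) ≤ s+1)]
        have h6 : s + 2 = ((m:ℝ)+4)/2 := by rw [hs]; ring
        rw [show s+1+1 = s+2 by ring, h6]
        have hp : (0:ℝ) < ((m:ℝ)+4)^2 := by positivity
        have hq : (0:ℝ) < ((m:ℝ)+6)^2 := by positivity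
        have : |w| < 2/((m:ℝ)+6)^2 := by convert hw using 2; ring
        calc 2*(((m:ℝ)+4)/2)^2*|w| = ((m:ℝ)+4)^2/2 * |w| := by ring
          _ < ((m:ℝ)+4)^2/2 * (2/((m:ℝ)+6)^2) := by
              apply mul_lt_mul_of_pos_left this (by positivity)
          _ ≤ 1 := by
              rw [div_mul_div_comm]
              rw [div_le_one (by positivity)]
              nlinarith
      have hb1 : 2*(|s|+1)^2*|w| < 1 := by
        rw [abs_of_nonneg hs0]
        have h1 : 2*(s+1)^2*|w| ≤ 2*(|s+1|+1)^2*|w| := by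
          rw [abs_of_nonneg (by linarith : (0:ℝ) ≤ s+1)]
          nlinarith
        linarith
      have hb3 : 2*(|s-1|+1)^2*|w| < 1 := by
        have h1 : |s-1| ≤ s+1 := by
          cases abs_cases (s-1) with
          | inl h => linarith [h.1]
          | inr h => linarith [h.1]
        have e1 : (|s-1|+1)^2 ≤ (s+1+1)^2 := by nlinarith [abs_nonneg (s-1)]
        have e2 := mul_le_mul_of_nonneg_right e1 hwa
        have h2 : 2*(|s-1|+1)^2*|w| ≤ 2*(|s+1|+1)^2*|w| := by
          rw [abs_of_nonneg (by linarith : (0:ℝ) ≤ s+1)]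
          linarith
        linarith
      have hrel := hgS_rel s w hb1 hb2 hb3
      have hwm : |w| < 2/((m:ℝ)+4)^2 := by
        have : (2:ℝ)/((m:ℝ)+6)^2 ≤ 2/((m:ℝ)+4)^2 := by
          apply div_le_div_of_nonneg_left (by norm_num) (by positivity)
          nlinarith
        calc |w| < 2/((m:ℝ)+2+4)^2 := hw
          _ ≤ 2/((m:ℝ)+4)^2 := by convert this using 3; ring
      have hSm : hgS s w = (Polynomial.Chebyshev.T ℝ (m:ℤ)).eval (Real.sqrt (1-w)) :=
        IH m (by omega) w hwm
      set x := Real.sqrt (1-w) with hx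
      have hw1 : 1 - w ≥ 0 := by
        have h36 : (2:ℝ)/((m:ℝ)+2+4)^2 ≤ 1 := by
          rw [div_le_one (by positivity)]
          nlinarith
        have := le_abs_self w
        linarith
      have hx2 : x^2 = 1 - w := Real.sq_sqrt hw1
      have hT2 : (Polynomial.Chebyshev.T ℝ 2).eval x = 1 - 2*w := by
        rw [Polynomial.Chebyshev.T_two]
        simp only [eval_sub, eval_mul, eval_pow, eval_ofNat, eval_X, eval_one]
        rw [show (2:ℝ)*x^2 - 1 = 2*(x^2) - 1 by ring, hx2]; ring
      have hmulT : (Polynomial.Chebyshev.T ℝ ((m:ℤ)+2)).eval x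
          = 2 * (Polynomial.Chebyshev.T ℝ 2).eval x * (Polynomial.Chebyshev.T ℝ (m:ℤ)).eval x
            - (Polynomial.Chebyshev.T ℝ ((m:ℤ)-2)).eval x := by
        have := Polynomial.Chebyshev.T_mul_T ℝ 2 (m:ℤ)
        have he := congrArg (fun p => Polynomial.eval x p) this
        simp only [eval_mul, eval_add, eval_ofNat] at he
        rw [show (2:ℤ) + (m:ℤ) = (m:ℤ) + 2 by ring, show (2:ℤ) - (m:ℤ) = -((m:ℤ)-2) by ring,
          Polynomial.Chebyshev.T_neg] at he
        linarith [he]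
      have hSm2 : hgS (s-1) w = (Polynomial.Chebyshev.T ℝ ((m:ℤ)-2)).eval x := by
        match m with
        | 0 =>
          have hneg : s - 1 = -(s+1) := by rw [hs]; norm_num
          have h1 : hgS (s-1) w = hgS (s+1) w := by rw [hneg, hgS_neg]
          have h2 : hgS (s+1) w = (1 - 2*w) * hgS s w := by
            rw [h1] at hrel; linarith
          rw [h1, h2, hSm]
          rw [show (((0:ℕ):ℤ)) - 2 = -(2:ℤ) by norm_num, Polynomial.Chebyshev.T_neg]
          rw [show (((0:ℕ):ℤ)) = (0:ℤ) by norm_num, Polynomial.Chebyshev.T_zero, hT2]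
          simp
        | 1 =>
          have h12 : s - 1 = -(1/2 : ℝ) := by rw [hs]; norm_num
          rw [h12, hgS_neg]
          have hw' : |w| < 2 / (((1:ℕ):ℝ) + 4)^2 := by
            push_cast at hw ⊢
            norm_num at hw ⊢
            linarith
          have := IH 1 (by omega) w hw'
          push_cast at this
          rw [this]
          norm_num [Polynomial.Chebyshev.T_neg, hx]
        | (r+2) =>
          have h12 : s - 1 = ((r:ℕ):ℝ)/2 := by rw [hs]; push_cast; ring
          rw [h12]
          have hwr : |w| < 2/((r:ℝ)+4)^2 := by
            have h5 : (2:ℝ)/((r:ℝ)+2+2+4)^2 ≤ 2/((r:ℝ)+4)^2 := by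
              apply div_le_div_of_nonneg_left (by norm_num) (by positivity)
              nlinarith [Nat.cast_nonneg (α := ℝ) r]
            push_cast at hw
            linarith
          have := IH r (by omega) w hwr
          rw [this]
          congr 1
          push_cast
          ring
      have hgoal : hgS (s+1) w = 2*(1-2*w) * hgS s w - hgS (s-1) w := by
        rw [hSm] at hrel ⊢
        linarith [hrel]
      have hfin : hgS (((m:ℝ)+2)/2) w = (Polynomial.Chebyshev.T ℝ ((m:ℤ)+2)).eval x := by
        rw [show ((m:ℝ)+2)/2 = s + 1 by rw [hs]; ring, hgoal, hmulT, hT2, hSm, hSm2]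
      rw [show (((m+2:ℕ)):ℤ) = (m:ℤ)+2 by norm_cast,
        show (((m+2:ℕ)):ℝ) = (m:ℝ)+2 by norm_cast]
      exact hfin

/-! ### analyticity -/

lemma analyticAt_sqrt {x : ℝ} (hx : 0 < x) : AnalyticAt ℝ Real.sqrt x := by
  have h1 : AnalyticAt ℂ (fun ζ : ℂ => ζ ^ (1/2 : ℂ)) (x : ℂ) := by
    apply AnalyticAt.cpow analyticAt_id analyticAt_const
    exact Or.inl (by simpa using hx)
  have h2 : AnalyticAt ℝ (fun t : ℝ => ((t : ℂ) ^ (1/2 : ℂ))) x := by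
    have hof : AnalyticAt ℝ (fun t : ℝ => (t : ℂ)) x := Complex.ofRealCLM.analyticAt x
    exact (h1.restrictScalars).comp hof
  have h3 : AnalyticAt ℝ (fun t : ℝ => ((t : ℂ) ^ (1/2 : ℂ)).re) x :=
    (Complex.reCLM.analyticAt _).comp h2
  apply h3.congr
  have : ∀ᶠ t in nhds x, 0 < t := eventually_gt_nhds hx
  filter_upwards [this] with t ht
  have hc : ((1:ℂ)/2) = (((1/2 : ℝ)):ℂ) := by norm_num
  rw [hc, ← Complex.ofReal_cpow ht.le, Complex.ofReal_re, Real.sqrt_eq_rpow]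

lemma analyticOnNhd_TH (n : ℕ) :
    AnalyticOnNhd ℝ (fun w => (Polynomial.Chebyshev.T ℝ (n : ℤ)).eval (Real.sqrt (1 - w)))
      (Set.Iio (1:ℝ)) := by
  intro w hw
  have h1 : AnalyticAt ℝ (fun v : ℝ => 1 - v) w := analyticAt_const.sub analyticAt_id
  have h2 : AnalyticAt ℝ (fun v : ℝ => Real.sqrt (1 - v)) w :=
    (analyticAt_sqrt (by simpa using hw)).comp h1
  have h3 := h2.aeval_polynomial (Polynomial.Chebyshev.T ℝ (n : ℤ))
  apply h3.congr
  filter_upwards with t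
  rw [← Polynomial.coe_aeval_eq_eval]

end Stmt14Aux
end
/- ===== part 3: geometry of the hyperbolic distance, and final assembly ===== -/
noncomputable section
namespace Stmt14Aux
open Polynomial

lemma one_le_coshSqDistH (z z' : ℂ) (hz : 0 < z.im) (hz' : 0 < z'.im) :
    1 ≤ coshSqDistH z z' := by
  rw [coshSqDistH, le_div_iff₀ (by positivity)]
  nlinarith [sq_nonneg (z.im - z'.im), sq_nonneg (z.re - z'.re)]

lemma arcosh_nonneg {x : ℝ} (hx : 1 ≤ x) : 0 ≤ arcosh x := by
  apply Real.log_nonneg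
  have := Real.sqrt_nonneg (x ^ 2 - 1)
  linarith

lemma cosh_arcosh {x : ℝ} (hx : 1 ≤ x) : Real.cosh (arcosh x) = x := by
  have hx2 : (0:ℝ) ≤ x ^ 2 - 1 := by nlinarith
  have hsn := Real.sqrt_nonneg (x ^ 2 - 1)
  have hu : 0 < x + Real.sqrt (x ^ 2 - 1) := by linarith
  rw [arcosh, Real.cosh_log hu]
  have hss : Real.sqrt (x^2-1) * Real.sqrt (x^2-1) = x^2-1 := Real.mul_self_sqrt hx2
  have hmul : (x - Real.sqrt (x^2-1)) * (x + Real.sqrt (x^2-1)) = 1 := by nlinarith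
  have hinv : (x + Real.sqrt (x^2-1))⁻¹ = x - Real.sqrt (x^2-1) :=
    (eq_inv_of_mul_eq_one_left hmul).symm
  rw [hinv]; ring

end Stmt14Aux
end


/-- (Proposition 3.3 ii)). For `k ∈ ℝ` with `2|k| = n ∈ ℕ` and
`0 < ρ(z,z') < t`, the kernel `Ṽ_k(t,z,z')` equals
`(1/(2π)) ((z̄−z')/(z̄'−z))^k (cosh²(t/2) − cosh²(ρ/2))^{-1/2} T_n(cosh(t/2)/cosh(ρ/2))`;
i.e. the analytic continuation `G` of the Gauss hypergeometric series
`F(|k|, −|k|; 1/2; ·)` satisfies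
`G(1 − cosh²(t/2)/cosh²(ρ/2)) = T_n(cosh(t/2)/cosh(ρ/2))`. -/
theorem stmt14 (k : ℝ) (n : ℕ) (hk : 2 * |k| = (n : ℝ)) (t : ℝ) (z z' : ℂ)
    (hz : 0 < z.im) (hz' : 0 < z'.im)
    (hρ : 0 < rhoH z z') (hρt : rhoH z z' < t)
    (G : ℝ → ℝ) (hGan : AnalyticOnNhd ℝ G (Set.Iio 1))
    (hGser : ∀ w : ℝ, |w| < 1 →
      G w = ∑' m : ℕ, ((ascPochhammer ℝ m).eval |k| * (ascPochhammer ℝ m).eval (-|k|)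
        / ((ascPochhammer ℝ m).eval (1 / 2) * (Nat.factorial m))) * w ^ m) :
    VH k n t z z'
      = ((1 / (2 * Real.pi) : ℝ) : ℂ)
          * (((starRingEnd ℂ) z - z') / ((starRingEnd ℂ) z' - z)) ^ (k : ℂ)
          * (((Real.cosh (t / 2) ^ 2 - coshSqDistH z z') ^ (-(1 / 2 : ℝ)) : ℝ) : ℂ)
          * ((G (1 - Real.cosh (t / 2) ^ 2 / coshSqDistH z z') : ℝ) : ℂ)
    ∧ G (1 - Real.cosh (t / 2) ^ 2 / coshSqDistH z z')
      = (Polynomial.Chebyshev.T ℝ (n : ℤ)).eval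
          (Real.cosh (t / 2) / Real.sqrt (coshSqDistH z z')) := by

  open Stmt14Aux in
  -- geometry
  have hD1 : 1 ≤ coshSqDistH z z' := Stmt14Aux.one_le_coshSqDistH z z' hz hz'
  have hD0 : (0:ℝ) < coshSqDistH z z' := lt_of_lt_of_le one_pos hD1
  have hsD1 : 1 ≤ Real.sqrt (coshSqDistH z z') := by
    rw [show (1:ℝ) = Real.sqrt 1 by rw [Real.sqrt_one]]
    exact Real.sqrt_le_sqrt hD1
  have hrt : arcosh (Real.sqrt (coshSqDistH z z')) < t/2 := by
    rw [rhoH] at hρt; linarith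
  have harc0 : 0 ≤ arcosh (Real.sqrt (coshSqDistH z z')) := Stmt14Aux.arcosh_nonneg hsD1
  have hsc : Real.sqrt (coshSqDistH z z') < Real.cosh (t/2) := by
    have h1 : Real.cosh (arcosh (Real.sqrt (coshSqDistH z z'))) < Real.cosh (t/2) := by
      rw [Real.cosh_lt_cosh]
      rw [abs_of_nonneg harc0, abs_of_nonneg (by linarith : (0:ℝ) ≤ t/2)]
      exact hrt
    rwa [Stmt14Aux.cosh_arcosh hsD1] at h1
  have hc0 : (0:ℝ) < Real.cosh (t/2) := Real.cosh_pos (t/2)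
  have hDc : coshSqDistH z z' < Real.cosh (t/2) ^ 2 := by
    have h2 : Real.sqrt (coshSqDistH z z') ^ 2 < Real.cosh (t/2) ^ 2 :=
      pow_lt_pow_left₀ hsc (Real.sqrt_nonneg _) (by norm_num)
    rwa [Real.sq_sqrt hD0.le] at h2
  have hw₀Iio : (1 - Real.cosh (t/2) ^ 2 / coshSqDistH z z') ∈ Set.Iio (1:ℝ) := by
    simp only [Set.mem_Iio]
    have : (0:ℝ) < Real.cosh (t/2) ^ 2 / coshSqDistH z z' := by positivity
    linarith
  have hsqrtw₀ : Real.sqrt (1 - (1 - Real.cosh (t/2) ^ 2 / coshSqDistH z z'))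
      = Real.cosh (t/2) / Real.sqrt (coshSqDistH z z') := by
    rw [show (1:ℝ) - (1 - Real.cosh (t/2) ^ 2 / coshSqDistH z z')
        = Real.cosh (t/2) ^ 2 / coshSqDistH z z' by ring]
    rw [Real.sqrt_div (sq_nonneg _), Real.sqrt_sq hc0.le]
  -- identity theorem
  have hkabs : |k| = (n:ℝ)/2 := by linarith
  have hev : G =ᶠ[nhds (0:ℝ)]
      (fun w => (Polynomial.Chebyshev.T ℝ (n : ℤ)).eval (Real.sqrt (1 - w))) := by
    have hεpos : (0:ℝ) < 2/((n:ℝ)+4)^2 := by positivity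
    filter_upwards [Metric.ball_mem_nhds (0:ℝ) hεpos] with w hwball
    rw [Metric.mem_ball, Real.dist_eq, sub_zero] at hwball
    have hw1 : |w| < 1 := by
      have : (2:ℝ)/((n:ℝ)+4)^2 ≤ 1 := by
        rw [div_le_one (by positivity)]
        nlinarith [Nat.cast_nonneg (α := ℝ) n]
      linarith
    rw [hGser w hw1]
    have h2 := Stmt14Aux.hg_main n w hwball
    simp only [Stmt14Aux.hgS, Stmt14Aux.hgA] at h2
    rw [hkabs]
    exact h2
  have hEq : Set.EqOn G
      (fun w => (Polynomial.Chebyshev.T ℝ (n : ℤ)).eval (Real.sqrt (1 - w))) (Set.Iio 1) :=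
    hGan.eqOn_of_preconnected_of_eventuallyEq (Stmt14Aux.analyticOnNhd_TH n)
      isPreconnected_Iio (by norm_num : (0:ℝ) ∈ Set.Iio 1) hev
  have hpart2 : G (1 - Real.cosh (t / 2) ^ 2 / coshSqDistH z z')
      = (Polynomial.Chebyshev.T ℝ (n : ℤ)).eval
          (Real.cosh (t / 2) / Real.sqrt (coshSqDistH z z')) := by
    have h3 := hEq hw₀Iio
    simp only at h3
    rw [h3, hsqrtw₀]
  refine ⟨?_, hpart2⟩
  unfold VH
  rw [if_pos hDc, hpart2]
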